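/- arXiv:0804.2605 — 2 statements merged into one kernel-verified Lean document; each statement's English description precedes it below -/
import Mathlib

section
/- Let $\bar A = \begin{pmatrix} 0 & 1 \\ \bar q - \lambda & 0 \end{pmatrix}$ with $\lambda \neq \bar q$, let $q : \mathbb{R} \to \mathbb{R}$, and let $A(\delta) = \begin{pmatrix} 0 & 1 \\ q(x_{0}+\delta) - \lambda & 0 \end{pmatrix}$. Then $B(\delta) = e^{-\delta\bar A}(A(\delta) - \bar A)e^{\delta\bar A} = \Delta_q(\delta)\begin{pmatrix} \delta\,\eta_0(Z_{2\delta}) & \frac{1 - \xi(Z_{2\delta})}{2(\lambda - \bar q)} \\ -\frac{1 + \xi(Z_{2\delta})}{2} & -\delta\,\eta_0(Z_{2\delta}) \end{pmatrix}$, where $\Delta_q(\delta) = \bar q - q(x_{0}+\delta)$ and $Z_{2\delta} = (\bar q - \lambda)(2\delta)^2$. -/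
noncomputable def xi (Z : ℝ) : ℝ :=
  if Z ≤ 0 then Real.cos (Real.sqrt |Z|) else Real.cosh (Real.sqrt Z)

noncomputable def eta0 (Z : ℝ) : ℝ :=
  if Z < 0 then Real.sin (Real.sqrt |Z|) / Real.sqrt |Z|
  else if Z = 0 then 1 else Real.sinh (Real.sqrt Z) / Real.sqrt Z

/-!
`Ā² = (q̄ - λ) • 1`, so splitting the exponential series by parity gives
`exp (±δ • Ā) = ξ(Z) • 1 ± η₀(Z) • (δ • Ā)` with `Z = (q̄ - λ) δ²`: the even and odd parts
are the series of `cosh √Z` and `sinh √Z / √Z`. Conjugating `A(δ) - Ā = [[0, 0], [-Δ_q(δ), 0]]`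
by these gives `Δ_q(δ) • [[δ ξ η₀, δ² η₀²], [-ξ², -δ ξ η₀]]` evaluated at `Z`, and the
double-angle formulas `η₀(4Z) = ξ η₀`, `ξ(4Z) = 2ξ² - 1` together with `ξ² - Z η₀² = 1`
rewrite it at `Z₂δ = 4Z`.
-/

open Real
open scoped Nat

theorem Real.induction_on_sq {P : ℝ → Prop} (zero : P 0)
    (sq : ∀ y > 0, P (y ^ 2)) (neg_sq : ∀ y > 0, P (-y ^ 2)) (Z : ℝ) : P Z := by
  rcases lt_trichotomy Z 0 with h | rfl | h
  · simpa [sq_sqrt (neg_nonneg.2 h.le)] using neg_sq √(-Z) (sqrt_pos.2 (neg_pos.2 h))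
  · exact zero
  · simpa [sq_sqrt h.le] using sq √Z (sqrt_pos.2 h)

@[simp] theorem xi_zero : xi 0 = 1 := by simp [xi]

@[simp] theorem eta0_zero : eta0 0 = 1 := by simp [eta0]

theorem xi_sq_eq_cosh {y : ℝ} (hy : 0 < y) : xi (y ^ 2) = cosh y := by
  rw [xi, if_neg (pow_pos hy 2).not_ge, sqrt_sq hy.le]

theorem xi_neg_sq_eq_cos {y : ℝ} (hy : 0 < y) : xi (-y ^ 2) = cos y := by
  rw [xi, if_pos (neg_nonpos.2 (sq_nonneg y)), abs_neg, abs_sq, sqrt_sq hy.le]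

theorem eta0_sq_eq_sinh_div {y : ℝ} (hy : 0 < y) : eta0 (y ^ 2) = sinh y / y := by
  simp [eta0, hy.ne', sqrt_sq hy.le, (pow_pos hy 2).not_gt]

theorem eta0_neg_sq_eq_sin_div {y : ℝ} (hy : 0 < y) : eta0 (-y ^ 2) = sin y / y := by
  simp [eta0, hy.ne', sqrt_sq hy.le]

theorem xi_sq_sub_mul_eta0_sq (Z : ℝ) : xi Z ^ 2 - Z * eta0 Z ^ 2 = 1 := by
  induction Z using Real.induction_on_sq with
  | zero => simp
  | sq y hy =>
    rw [xi_sq_eq_cosh hy, eta0_sq_eq_sinh_div hy, div_pow,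
      mul_div_cancel₀ _ (pow_ne_zero 2 hy.ne'), cosh_sq_sub_sinh_sq]
  | neg_sq y hy =>
    rw [xi_neg_sq_eq_cos hy, eta0_neg_sq_eq_sin_div hy, div_pow, neg_mul,
      mul_div_cancel₀ _ (pow_ne_zero 2 hy.ne'), sub_neg_eq_add, cos_sq_add_sin_sq]

theorem xi_four_mul (Z : ℝ) : xi (4 * Z) = 2 * xi Z ^ 2 - 1 := by
  induction Z using Real.induction_on_sq with
  | zero => norm_num
  | sq y hy =>
    rw [show 4 * y ^ 2 = (2 * y) ^ 2 by ring, xi_sq_eq_cosh (by positivity), xi_sq_eq_cosh hy,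
      cosh_two_mul, sinh_sq]
    ring
  | neg_sq y hy =>
    rw [show 4 * -y ^ 2 = -(2 * y) ^ 2 by ring, xi_neg_sq_eq_cos (by positivity),
      xi_neg_sq_eq_cos hy, cos_two_mul]

theorem eta0_four_mul (Z : ℝ) : eta0 (4 * Z) = xi Z * eta0 Z := by
  induction Z using Real.induction_on_sq with
  | zero => simp
  | sq y hy =>
    rw [show 4 * y ^ 2 = (2 * y) ^ 2 by ring, eta0_sq_eq_sinh_div (by positivity),
      xi_sq_eq_cosh hy, eta0_sq_eq_sinh_div hy, sinh_two_mul]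
    field_simp
  | neg_sq y hy =>
    rw [show 4 * -y ^ 2 = -(2 * y) ^ 2 by ring, eta0_neg_sq_eq_sin_div (by positivity),
      xi_neg_sq_eq_cos hy, eta0_neg_sq_eq_sin_div hy, sin_two_mul]
    field_simp

theorem hasSum_xi (Z : ℝ) : HasSum (fun k ↦ Z ^ k / (2 * k)!) (xi Z) := by
  induction Z using Real.induction_on_sq with
  | zero =>
    simpa using hasSum_single (f := fun k : ℕ ↦ (0 : ℝ) ^ k / (2 * k)!) 0 (by simp +contextual)
  | sq y hy => simpa [xi_sq_eq_cosh hy, ← pow_mul] using hasSum_cosh y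
  | neg_sq y hy =>
    rw [xi_neg_sq_eq_cos hy]
    exact (hasSum_cos y).congr_fun fun k ↦ by rw [neg_pow, ← pow_mul, mul_div_assoc]

theorem hasSum_eta0 (Z : ℝ) : HasSum (fun k ↦ Z ^ k / (2 * k + 1)!) (eta0 Z) := by
  induction Z using Real.induction_on_sq with
  | zero =>
    simpa using
      hasSum_single (f := fun k : ℕ ↦ (0 : ℝ) ^ k / (2 * k + 1)!) 0 (by simp +contextual)
  | sq y hy =>
    rw [eta0_sq_eq_sinh_div hy]
    refine ((hasSum_sinh y).div_const y).congr_fun fun k ↦ ?_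
    rw [pow_succ y (2 * k), pow_mul]
    field_simp
  | neg_sq y hy =>
    rw [eta0_neg_sq_eq_sin_div hy]
    refine ((hasSum_sin y).div_const y).congr_fun fun k ↦ ?_
    rw [pow_succ y (2 * k), pow_mul, neg_pow]
    field_simp

theorem exp_eq_xi_smul_one_add_eta0_smul {𝔸 : Type*} [Ring 𝔸] [Algebra ℝ 𝔸]
    [TopologicalSpace 𝔸] [IsTopologicalRing 𝔸] [ContinuousSMul ℝ 𝔸] [T2Space 𝔸] {X : 𝔸} {Z : ℝ}
    (hX : X ^ 2 = Z • 1) : NormedSpace.exp X = xi Z • 1 + eta0 Z • X := by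
  rw [NormedSpace.exp_eq_tsum ℝ]
  refine (HasSum.even_add_odd ?_ ?_).tsum_eq
  · refine ((hasSum_xi Z).smul_const 1).congr_fun fun k ↦ ?_
    rw [pow_mul, hX, smul_pow, one_pow, smul_smul, div_eq_inv_mul]
  · refine ((hasSum_eta0 Z).smul_const X).congr_fun fun k ↦ ?_
    rw [pow_succ, pow_mul, hX, smul_pow, one_pow, smul_one_mul, smul_smul, div_eq_inv_mul]

theorem Matrix.sq_fin_two_antidiag {R : Type*} [CommRing R] (b c : R) :
    !![0, b; c, 0] ^ 2 = (b * c) • (1 : Matrix (Fin 2) (Fin 2) R) := by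
  rw [sq, Matrix.mul_fin_two, Matrix.one_fin_two, Matrix.smul_of, mul_comm c b]
  simp

theorem Matrix.conj_lowerNilpotent_fin_two {R : Type*} [CommRing R] (a c s d : R) :
    (c • 1 - s • !![0, 1; a, 0]) * !![0, 0; -d, 0] * (c • 1 + s • !![0, 1; a, 0]) =
      d • !![c * s, s ^ 2; -c ^ 2, -(c * s)] := by
  ext i j
  fin_cases i <;> fin_cases j <;> simp [Matrix.mul_apply, Fin.sum_univ_two] <;> ring

theorem modified_B_explicit
    (qbar lam x0 δ : ℝ) (hne : lam ≠ qbar) (q : ℝ → ℝ)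
    (Abar : Matrix (Fin 2) (Fin 2) ℝ) (hAbar : Abar = !![0, 1; qbar - lam, 0])
    (A : ℝ → Matrix (Fin 2) (Fin 2) ℝ)
    (hA : ∀ s : ℝ, A s = !![0, 1; q (x0 + s) - lam, 0])
    (Δq : ℝ → ℝ) (hΔq : ∀ s : ℝ, Δq s = qbar - q (x0 + s))
    (Z2δ : ℝ) (hZ : Z2δ = (qbar - lam) * (2 * δ) ^ 2) :
    NormedSpace.exp (-(δ • Abar)) * (A δ - Abar) * NormedSpace.exp (δ • Abar) =
      Δq δ • !![δ * eta0 Z2δ, (1 - xi Z2δ) / (2 * (lam - qbar));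
                -((1 + xi Z2δ) / 2), -(δ * eta0 Z2δ)] := by
  set Z := (qbar - lam) * δ ^ 2 with hZdef
  have hsq : (δ • Abar) ^ 2 = Z • 1 := by
    rw [smul_pow, hAbar, Matrix.sq_fin_two_antidiag, one_mul, smul_smul, mul_comm]
  have hsq_neg : (-(δ • Abar)) ^ 2 = Z • 1 := by rw [neg_sq, hsq]
  have hdiff : A δ - Abar = !![0, 0; -Δq δ, 0] := by
    rw [hA, hAbar, hΔq]
    ext i j
    fin_cases i <;> fin_cases j <;> simp
  have h_upper_right : (1 - xi (4 * Z)) / (2 * (lam - qbar)) = (eta0 Z * δ) ^ 2 := by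
    have hlam : lam - qbar ≠ 0 := sub_ne_zero.2 hne
    field_simp
    linear_combination -xi_four_mul Z - 2 * xi_sq_sub_mul_eta0_sq Z - 2 * eta0 Z ^ 2 * hZdef
  rw [exp_eq_xi_smul_one_add_eta0_smul hsq_neg, exp_eq_xi_smul_one_add_eta0_smul hsq, smul_neg,
    ← sub_eq_add_neg, smul_smul, hdiff, hAbar, Matrix.conj_lowerNilpotent_fin_two,
    show Z2δ = 4 * Z by rw [hZ]; ring, h_upper_right, xi_four_mul, eta0_four_mul]
  congr 1
  rw [← Matrix.ext_iff]
  simp only [Fin.forall_fin_two, Matrix.of_apply, Matrix.cons_val_zero, Matrix.cons_val_one,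
    and_true]
  exact ⟨by ring, by ring, by ring⟩
end

section
/- The commutator of $B(\delta_2)$ and $B(\delta_1)$ for the modified Schrödinger system decomposes as $[B(\delta_2), B(\delta_1)] = 2\Delta_q(\delta_1)\Delta_q(\delta_2)\left(K_1(\delta_1,\delta_2)U_1 + K_2(\delta_1,\delta_2)U_2 + K_3(\delta_1,\delta_2)U_3\right)$, where $K_1(x,y) = y\,\eta_0(Z_{2y}) - x\,\eta_0(Z_{2x})$, $K_2(x,y) = \xi(Z_{2x}) - \xi(Z_{2y})$, $K_3(x,y) = (x-y)\,\eta_0(Z_{2(x-y)})$, and $U_1 = \begin{pmatrix} 0 & \frac{1}{2(\lambda-\bar q)} \\ \frac12 & 0\end{pmatrix}$, $U_2 = \begin{pmatrix} -\frac{1}{4(\lambda - \bar q)} & 0 \\ 0 & \frac{1}{4(\lambda-\bar q)} \end{pmatrix}$, $U_3 = \begin{pmatrix} 0 & \frac{1}{2(\lambda-\bar q)} \\ -\frac12 & 0 \end{pmatrix}$. -/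
/-! With `ω² = λ - q̄`, `ξ(Z_γ) = cos(ωγ)` and `γ η₀(Z_γ) = sin(ωγ)/ω` (hyperbolic functions when
`λ < q̄`; `1` and `γ` when `λ = q̄`). The only analytic input is the subtraction formula
`sin(a - b) = sin a cos b - cos a sin b`, which turns `K₃(δ₁, δ₂)` into
`δ₁η₀(Z_{2δ₁}) ξ(Z_{2δ₂}) - ξ(Z_{2δ₁}) δ₂η₀(Z_{2δ₂})`; the commutator is then an entrywise
polynomial identity in these quantities and `1/(λ - q̄)`. -/

open Real

lemma xi_neg_sq (u : ℝ) : xi (-u ^ 2) = cos u := by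
  rw [xi, if_pos (neg_nonpos.mpr (sq_nonneg u)), abs_neg, abs_sq, sqrt_sq_eq_abs, cos_abs]

lemma xi_sq (u : ℝ) : xi (u ^ 2) = cosh u := by
  rcases eq_or_ne u 0 with rfl | hu
  · simp [xi]
  rw [xi, if_neg (not_le.mpr (by positivity)), sqrt_sq_eq_abs, cosh_abs]

lemma mul_eta0_neg_sq (u : ℝ) : u * eta0 (-u ^ 2) = sin u := by
  rcases eq_or_ne u 0 with rfl | hu
  · simp
  rw [eta0, if_pos (neg_neg_iff_pos.mpr (by positivity)), abs_neg, abs_sq, sqrt_sq_eq_abs]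
  have heven : sin |u| / |u| = sin u / u := by
    rcases abs_cases u with ⟨h, -⟩ | ⟨h, -⟩ <;> simp [h]
  rw [heven, mul_div_cancel₀ _ hu]

lemma mul_eta0_sq (u : ℝ) : u * eta0 (u ^ 2) = sinh u := by
  rcases eq_or_ne u 0 with rfl | hu
  · simp
  have hpos : 0 < u ^ 2 := by positivity
  rw [eta0, if_neg hpos.not_gt, if_neg hpos.ne', sqrt_sq_eq_abs]
  have heven : sinh |u| / |u| = sinh u / u := by
    rcases abs_cases u with ⟨h, -⟩ | ⟨h, -⟩ <;> simp [h]
  rw [heven, mul_div_cancel₀ _ hu]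

lemma mul_eta0_sub_of_rescale {μ w : ℝ} (hw : w ≠ 0) {c s : ℝ → ℝ}
    (hc : ∀ t, xi (μ * t ^ 2) = c (w * t)) (hs : ∀ t, w * (t * eta0 (μ * t ^ 2)) = s (w * t))
    (hsub : ∀ a b, s (a - b) = s a * c b - c a * s b) (x y : ℝ) :
    (x - y) * eta0 (μ * (x - y) ^ 2) =
      x * eta0 (μ * x ^ 2) * xi (μ * y ^ 2) - xi (μ * x ^ 2) * (y * eta0 (μ * y ^ 2)) := by
  refine mul_left_cancel₀ hw ?_
  rw [hs, hc, hc, mul_sub, hsub]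
  linear_combination c (w * x) * hs y - c (w * y) * hs x

lemma mul_eta0_sub (μ x y : ℝ) :
    (x - y) * eta0 (μ * (x - y) ^ 2) =
      x * eta0 (μ * x ^ 2) * xi (μ * y ^ 2) - xi (μ * x ^ 2) * (y * eta0 (μ * y ^ 2)) := by
  rcases lt_trichotomy μ 0 with hμ | rfl | hμ
  · have hw : √(-μ) ^ 2 = -μ := sq_sqrt (neg_nonneg.mpr hμ.le)
    have harg : ∀ t, μ * t ^ 2 = -(√(-μ) * t) ^ 2 := fun t => by rw [mul_pow, hw]; ring
    refine mul_eta0_sub_of_rescale (sqrt_pos.mpr (neg_pos.mpr hμ)).ne' (fun t => ?_) (fun t => ?_)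
      sin_sub x y
    · rw [harg, xi_neg_sq]
    · rw [harg, ← mul_eta0_neg_sq, mul_assoc]
  · simp [xi, eta0]
  · have hw : √μ ^ 2 = μ := sq_sqrt hμ.le
    have harg : ∀ t, μ * t ^ 2 = (√μ * t) ^ 2 := fun t => by rw [mul_pow, hw]
    refine mul_eta0_sub_of_rescale (sqrt_pos.mpr hμ).ne' (fun t => ?_) (fun t => ?_)
      sinh_sub x y
    · rw [harg, xi_sq]
    · rw [harg, ← mul_eta0_sq, mul_assoc]

theorem commutator_B_decomposition_general
    (qbar lam : ℝ)
    (Δq : ℝ → ℝ)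
    (Z : ℝ → ℝ) (hZ : ∀ γ : ℝ, Z γ = (qbar - lam) * γ ^ 2)
    (B : ℝ → Matrix (Fin 2) (Fin 2) ℝ)
    (hB : ∀ δ : ℝ, B δ =
      Δq δ • !![δ * eta0 (Z (2 * δ)), (1 - xi (Z (2 * δ))) / (2 * (lam - qbar));
                -((1 + xi (Z (2 * δ))) / 2), -(δ * eta0 (Z (2 * δ)))])
    (K1 K2 K3 : ℝ → ℝ → ℝ)
    (hK1 : ∀ x y : ℝ, K1 x y = y * eta0 (Z (2 * y)) - x * eta0 (Z (2 * x)))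
    (hK2 : ∀ x y : ℝ, K2 x y = xi (Z (2 * x)) - xi (Z (2 * y)))
    (hK3 : ∀ x y : ℝ, K3 x y = (x - y) * eta0 (Z (2 * (x - y))))
    (U1 U2 U3 : Matrix (Fin 2) (Fin 2) ℝ)
    (hU1 : U1 = !![0, 1 / (2 * (lam - qbar)); 1 / 2, 0])
    (hU2 : U2 = !![-(1 / (4 * (lam - qbar))), 0; 0, 1 / (4 * (lam - qbar))])
    (hU3 : U3 = !![0, 1 / (2 * (lam - qbar)); -(1 / 2), 0])
    (δ1 δ2 : ℝ) :
    B δ2 * B δ1 - B δ1 * B δ2 =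
      (2 * Δq δ1 * Δq δ2) •
        (K1 δ1 δ2 • U1 + K2 δ1 δ2 • U2 + K3 δ1 δ2 • U3) := by
  have hK3_expand : K3 δ1 δ2 = δ1 * eta0 (Z (2 * δ1)) * xi (Z (2 * δ2))
      - xi (Z (2 * δ1)) * (δ2 * eta0 (Z (2 * δ2))) := by
    have h := mul_eta0_sub (qbar - lam) (2 * δ1) (2 * δ2)
    rw [← mul_sub] at h
    simp only [hK3, hZ]
    linear_combination h / 2
  rw [hB, hB, hK1, hK2, hK3_expand, hU1, hU2, hU3]
  -- `ring` treats `(2 * (lam - qbar))⁻¹` as an atom unless the difference is a variable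
  generalize lam - qbar = a
  ext i j
  fin_cases i <;> fin_cases j <;>
    simp only [Matrix.mul_apply, Matrix.smul_apply, Matrix.add_apply, Matrix.sub_apply,
      Fin.sum_univ_two, smul_eq_mul, Fin.isValue, Matrix.of_apply, Matrix.cons_val',
      Matrix.cons_val_zero, Matrix.cons_val_one, Matrix.empty_val', Matrix.cons_val_fin_one,
      Fin.zero_eta, Fin.mk_one] <;>
    ring

theorem commutator_B_decomposition
    (qbar lam x0 : ℝ) (hne : lam ≠ qbar) (q : ℝ → ℝ)
    (Δq : ℝ → ℝ) (hΔq : ∀ s : ℝ, Δq s = qbar - q (x0 + s))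
    (Z : ℝ → ℝ) (hZ : ∀ γ : ℝ, Z γ = (qbar - lam) * γ ^ 2)
    (B : ℝ → Matrix (Fin 2) (Fin 2) ℝ)
    (hB : ∀ δ : ℝ, B δ =
      Δq δ • !![δ * eta0 (Z (2 * δ)), (1 - xi (Z (2 * δ))) / (2 * (lam - qbar));
                -((1 + xi (Z (2 * δ))) / 2), -(δ * eta0 (Z (2 * δ)))])
    (K1 K2 K3 : ℝ → ℝ → ℝ)
    (hK1 : ∀ x y : ℝ, K1 x y = y * eta0 (Z (2 * y)) - x * eta0 (Z (2 * x)))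
    (hK2 : ∀ x y : ℝ, K2 x y = xi (Z (2 * x)) - xi (Z (2 * y)))
    (hK3 : ∀ x y : ℝ, K3 x y = (x - y) * eta0 (Z (2 * (x - y))))
    (U1 U2 U3 : Matrix (Fin 2) (Fin 2) ℝ)
    (hU1 : U1 = !![0, 1 / (2 * (lam - qbar)); 1 / 2, 0])
    (hU2 : U2 = !![-(1 / (4 * (lam - qbar))), 0; 0, 1 / (4 * (lam - qbar))])
    (hU3 : U3 = !![0, 1 / (2 * (lam - qbar)); -(1 / 2), 0])
    (δ1 δ2 : ℝ) :
    B δ2 * B δ1 - B δ1 * B δ2 =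
      (2 * Δq δ1 * Δq δ2) •
        (K1 δ1 δ2 • U1 + K2 δ1 δ2 • U2 + K3 δ1 δ2 • U3) :=
  commutator_B_decomposition_general qbar lam Δq Z hZ B hB K1 K2 K3 hK1 hK2 hK3 U1 U2 U3 hU1 hU2 hU3
    δ1 δ2
end
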